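/- arXiv:1211.4565 — 3 statements merged into one kernel-verified Lean document; each statement's English description precedes it below -/
import Mathlib

section
/- Let W_Γ be a right-angled Coxeter group and let w = a₁a₂⋯a_k be a word in the generators such that for each i (indices mod k), a_i ≠ a_{i+1} and a_i does not commute with a_{i+1} (i.e., a_i and a_{i+1} are not adjacent in Γ). Then for every n ≥ 1 the word wⁿ is reduced; in particular, the element represented by wⁿ has word length exactly nk. -/
/-- The set of relators of the right-angled Coxeter group of a graph `Γ`:
squares of the generators, and commutators of generators joined by an edge. -/
def racgRels {V : Type*} (Γ : SimpleGraph V) : Set (FreeGroup V) :=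
  {r | (∃ s : V, r = FreeGroup.of s * FreeGroup.of s) ∨
       (∃ s t : V, Γ.Adj s t ∧
         r = FreeGroup.of s * FreeGroup.of t * (FreeGroup.of s)⁻¹ * (FreeGroup.of t)⁻¹)}

/-- The right-angled Coxeter group of a graph `Γ`. -/
abbrev RACG {V : Type*} (Γ : SimpleGraph V) : Type _ := PresentedGroup (racgRels Γ)

/-- The generator of `RACG Γ` corresponding to a vertex `s`. -/
def racgGen {V : Type*} (Γ : SimpleGraph V) (s : V) : RACG Γ :=
  PresentedGroup.of (rels := racgRels Γ) s

/-!
Let `W_Γ` act on cancellation-free words up to commutation of adjacent commuting letters: the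
generator `s` deletes the first `s` of a word when that letter can be commuted to the front, and
prepends `s` otherwise. The relators act trivially, and a generator changes the length by at most
one, so the element spelled by a word `m` moves the empty word to a word of length at most `|m|`.
A word whose consecutive letters are distinct and do not commute is cancellation-free and is built
up by prepending alone, so the element it spells moves the empty word to that word itself. Because
the condition on `w` is cyclic, `wⁿ` is such a word.
-/

open List Relation

theorem List.isChain_flatten_replicate_ofFn {α : Type*} {R : α → α → Prop} {k : ℕ} (hk : 0 < k)
    {w : Fin k → α} (h : ∀ i : Fin k, R (w i) (w ⟨(i + 1) % k, Nat.mod_lt _ hk⟩)) (n : ℕ) :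
    IsChain R (replicate n (ofFn w)).flatten := by
  have hne : ofFn w ≠ [] := by simpa using hk.ne'
  rw [isChain_flatten fun h => hne (eq_of_mem_replicate h).symm]
  refine ⟨fun l hl => eq_of_mem_replicate hl ▸ isChain_ofFn.2 fun i hi => ?_,
    isChain_replicate_of_rel n ?_⟩
  · simpa [Nat.mod_eq_of_lt hi] using h ⟨i, by omega⟩
  · rw [getLast?_eq_some_getLast hne, head?_eq_some_head hne, getLast_ofFn, head_ofFn]
    simpa [Nat.sub_add_cancel hk] using h ⟨k - 1, by omega⟩

namespace RightAngledCoxeter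

variable {V : Type*} (Γ : SimpleGraph V)

def CanMoveToHead (s : V) : List V → Prop
  | [] => False
  | a :: l => a = s ∨ (Γ.Adj s a ∧ CanMoveToHead s l)

@[simp]
theorem canMoveToHead_cons {s a : V} {l : List V} :
    CanMoveToHead Γ s (a :: l) ↔ a = s ∨ (Γ.Adj s a ∧ CanMoveToHead Γ s l) :=
  Iff.rfl

-- Some letter can be commuted up to a later copy of itself, so that the two cancel.
def HasCancellation : List V → Prop
  | [] => False
  | a :: l => CanMoveToHead Γ a l ∨ HasCancellation l

inductive CommSwap : List V → List V → Prop
  | head {s t : V} (h : Γ.Adj s t) (l : List V) : CommSwap (s :: t :: l) (t :: s :: l)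
  | cons (a : V) {l l' : List V} : CommSwap l l' → CommSwap (a :: l) (a :: l')

variable {Γ}

theorem canMoveToHead_cons_of_adj {s t : V} (hadj : Γ.Adj s t) {l : List V} :
    CanMoveToHead Γ s (t :: l) ↔ CanMoveToHead Γ s l :=
  ⟨fun h => (h.resolve_left hadj.ne').2, fun h => Or.inr ⟨hadj, h⟩⟩

theorem not_canMoveToHead_cons_of_compl_adj {s a : V} (h : Γᶜ.Adj s a) (l : List V) :
    ¬ CanMoveToHead Γ s (a :: l) := by
  rw [SimpleGraph.compl_adj] at h
  rintro (rfl | ⟨hadj, -⟩)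
  exacts [h.1 rfl, h.2 hadj]

theorem not_canMoveToHead_of_isChain_cons {s : V} {l : List V} (h : IsChain Γᶜ.Adj (s :: l)) :
    ¬ CanMoveToHead Γ s l := by
  cases l with
  | nil => exact id
  | cons a l => exact not_canMoveToHead_cons_of_compl_adj (isChain_cons_cons.1 h).1 l

theorem not_hasCancellation_of_isChain {l : List V} (h : IsChain Γᶜ.Adj l) :
    ¬ HasCancellation Γ l := by
  induction l with
  | nil => exact id
  | cons a l ih => exact fun hl => hl.elim (not_canMoveToHead_of_isChain_cons h) (ih h.tail)

namespace CommSwap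

variable {l l' : List V}

theorem symm (h : CommSwap Γ l l') : CommSwap Γ l' l := by
  induction h with
  | head h l => exact head h.symm l
  | cons a _ ih => exact cons a ih

theorem length_eq (h : CommSwap Γ l l') : l.length = l'.length := by
  induction h with
  | head => rfl
  | cons a _ ih => simp [ih]

theorem canMoveToHead {u : V} (h : CommSwap Γ l l') (hu : CanMoveToHead Γ u l) :
    CanMoveToHead Γ u l' := by
  induction h with
  | head h l =>
    rcases hu with rfl | ⟨hus, rfl | ⟨hut, hu⟩⟩
    · exact Or.inr ⟨h, Or.inl rfl⟩
    · exact Or.inl rfl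
    · exact Or.inr ⟨hut, Or.inr ⟨hus, hu⟩⟩
  | cons a _ ih => exact hu.imp_right (And.imp_right ih)

theorem canMoveToHead_iff {u : V} (h : CommSwap Γ l l') :
    CanMoveToHead Γ u l ↔ CanMoveToHead Γ u l' :=
  ⟨h.canMoveToHead, h.symm.canMoveToHead⟩

theorem hasCancellation (h : CommSwap Γ l l') (hl : HasCancellation Γ l) :
    HasCancellation Γ l' := by
  induction h with
  | head h l =>
    rcases hl with (rfl | ⟨hst, hs⟩) | (ht | hl)
    · exact Or.inl (Or.inl rfl)
    · exact Or.inr (Or.inl hs)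
    · exact Or.inl (Or.inr ⟨h.symm, ht⟩)
    · exact Or.inr (Or.inr hl)
  | cons a h ih => exact hl.imp h.canMoveToHead ih

theorem erase [DecidableEq V] (s : V) (h : CommSwap Γ l l') :
    ReflTransGen (CommSwap Γ) (l.erase s) (l'.erase s) := by
  induction h with
  | @head u v h l =>
    by_cases hu : u = s
    · subst hu
      simpa [h.ne.symm] using .refl
    · by_cases hv : v = s
      · subst hv
        simpa [hu] using .refl
      · simpa [erase_cons, hu, hv] using ReflTransGen.single (head h (l.erase s))
  | cons a h ih =>
    by_cases ha : a = s
    · simpa [erase_cons, ha] using ReflTransGen.single h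
    · simpa [erase_cons, ha] using ih.lift (a :: ·) fun _ _ => cons a

end CommSwap

variable (Γ) in
abbrev CancelFree := {l : List V // ¬ HasCancellation Γ l}

variable (Γ) in
/-- Viennot's heaps of pieces: cancellation-free words up to commuting adjacent letters. -/
def Heap := Quot fun x y : CancelFree Γ => CommSwap Γ x.1 y.1

namespace Heap

def mk (x : CancelFree Γ) : Heap Γ := Quot.mk _ x

def length : Heap Γ → ℕ := Quot.lift (fun x => x.1.length) fun _ _ h => h.length_eq

variable (Γ) in
def nil : Heap Γ := mk ⟨[], id⟩

theorem mk_eq_mk_of_reflTransGen {l l' : List V} (h : ReflTransGen (CommSwap Γ) l l')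
    (hl : ¬ HasCancellation Γ l) (hl' : ¬ HasCancellation Γ l') : mk ⟨l, hl⟩ = mk ⟨l', hl'⟩ := by
  induction h with
  | refl => rfl
  | tail _ hbc ih => exact (ih fun h => hl' (hbc.hasCancellation h)).trans (Quot.sound hbc)

end Heap

section Erase

variable [DecidableEq V] {s t : V} {l : List V}

theorem cons_erase_reflTransGen (hs : CanMoveToHead Γ s l) :
    ReflTransGen (CommSwap Γ) (s :: l.erase s) l := by
  induction l with
  | nil => exact hs.elim
  | cons a l ih =>
    by_cases ha : a = s
    · simpa [ha] using .refl
    · rw [erase_cons_tail (by simpa using ha)]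
      have ⟨hadj, hs⟩ := hs.resolve_left ha
      exact .head (.head hadj _) ((ih hs).lift (a :: ·) fun _ _ => .cons a)

theorem canMoveToHead_erase_iff (hadj : Γ.Adj s t) (hs : CanMoveToHead Γ s l) :
    CanMoveToHead Γ t (l.erase s) ↔ CanMoveToHead Γ t l := by
  induction l with
  | nil => exact hs.elim
  | cons a l ih =>
    by_cases ha : a = s
    · subst ha
      simp [canMoveToHead_cons_of_adj hadj.symm]
    · rw [erase_cons_tail (by simpa using ha)]
      exact or_congr_right (and_congr_right fun _ => ih (hs.resolve_left ha).2)

theorem hasCancellation_of_erase (hs : CanMoveToHead Γ s l)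
    (hl : HasCancellation Γ (l.erase s)) : HasCancellation Γ l := by
  induction l with
  | nil => exact hs.elim
  | cons a l ih =>
    by_cases ha : a = s
    · subst ha
      exact Or.inr (by simpa using hl)
    · rw [erase_cons_tail (by simpa using ha)] at hl
      have ⟨hadj, hs⟩ := hs.resolve_left ha
      exact hl.imp (canMoveToHead_erase_iff hadj hs).1 (ih hs)

theorem not_canMoveToHead_erase_self (hl : ¬ HasCancellation Γ l) (hs : CanMoveToHead Γ s l) :
    ¬ CanMoveToHead Γ s (l.erase s) := by
  induction l with
  | nil => exact hs.elim
  | cons a l ih =>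
    by_cases ha : a = s
    · subst ha
      simpa using fun h => hl (Or.inl h)
    · rw [erase_cons_tail (by simpa using ha)]
      rintro (h | ⟨-, h⟩)
      exacts [ha h, ih (fun h => hl (Or.inr h)) (hs.resolve_left ha).2 h]

end Erase

section Action

variable [DecidableEq V]

variable (Γ) in
open Classical in
noncomputable def toggle (s : V) (l : List V) : List V :=
  if CanMoveToHead Γ s l then l.erase s else s :: l

theorem length_toggle_le (s : V) (l : List V) : (toggle Γ s l).length ≤ l.length + 1 := by
  unfold toggle
  split_ifs
  · exact length_erase_le.trans (Nat.le_succ _)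
  · rfl

theorem not_hasCancellation_toggle (s : V) {l : List V} (hl : ¬ HasCancellation Γ l) :
    ¬ HasCancellation Γ (toggle Γ s l) := by
  unfold toggle
  split_ifs with hs
  · exact fun h => hl (hasCancellation_of_erase hs h)
  · exact fun h => h.elim hs hl

theorem CommSwap.toggle (s : V) {l l' : List V} (h : CommSwap Γ l l') :
    ReflTransGen (CommSwap Γ) (toggle Γ s l) (toggle Γ s l') := by
  unfold RightAngledCoxeter.toggle
  rw [h.canMoveToHead_iff]
  split_ifs
  · exact h.erase s
  · exact .single (.cons s h)

theorem reflTransGen_toggle_toggle {s : V} {l : List V} (hl : ¬ HasCancellation Γ l) :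
    ReflTransGen (CommSwap Γ) (toggle Γ s (toggle Γ s l)) l := by
  by_cases hs : CanMoveToHead Γ s l
  · simpa [toggle, hs, not_canMoveToHead_erase_self hl hs] using cons_erase_reflTransGen hs
  · simpa [toggle, hs] using .refl

theorem reflTransGen_toggle_comm {s t : V} (hadj : Γ.Adj s t) (l : List V) :
    ReflTransGen (CommSwap Γ) (toggle Γ s (toggle Γ t l)) (toggle Γ t (toggle Γ s l)) := by
  by_cases hs : CanMoveToHead Γ s l <;> by_cases ht : CanMoveToHead Γ t l <;>
    simp [toggle, hs, ht, hadj, hadj.symm, hadj.ne, hadj.ne', canMoveToHead_erase_iff, erase_comm,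
      ReflTransGen.refl]
  exact .single (.head hadj l)

namespace Heap

noncomputable def toggle (s : V) : Heap Γ → Heap Γ :=
  Quot.lift (fun x => mk ⟨RightAngledCoxeter.toggle Γ s x.1, not_hasCancellation_toggle s x.2⟩)
    fun _ _ h => mk_eq_mk_of_reflTransGen (h.toggle s) _ _

theorem toggle_toggle (s : V) (q : Heap Γ) : toggle s (toggle s q) = q := by
  induction q using Quot.ind with
  | mk x => exact mk_eq_mk_of_reflTransGen (reflTransGen_toggle_toggle x.2) _ _

theorem toggle_comm {s t : V} (hadj : Γ.Adj s t) (q : Heap Γ) :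
    toggle s (toggle t q) = toggle t (toggle s q) := by
  induction q using Quot.ind
  exact mk_eq_mk_of_reflTransGen (reflTransGen_toggle_comm hadj _) _ _

theorem length_toggle_le (s : V) (q : Heap Γ) : (toggle s q).length ≤ q.length + 1 := by
  induction q using Quot.ind
  exact RightAngledCoxeter.length_toggle_le s _

end Heap

variable (Γ) in
noncomputable def heapAction : RACG Γ →* Equiv.Perm (Heap Γ) :=
  PresentedGroup.toGroup (f := fun s => Function.Involutive.toPerm _ (Heap.toggle_toggle s)) <| by
    rintro r (⟨s, rfl⟩ | ⟨s, t, hadj, rfl⟩)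
    · simp only [map_mul, FreeGroup.lift_apply_of]
      ext q
      exact Heap.toggle_toggle s q
    · simp only [map_mul, map_inv, FreeGroup.lift_apply_of]
      rw [← commutatorElement_def, commutatorElement_eq_one_iff_mul_comm]
      ext q
      exact Heap.toggle_comm hadj q

theorem heapAction_racgGen (s : V) (q : Heap Γ) :
    heapAction Γ (racgGen Γ s) q = Heap.toggle s q := by
  rw [heapAction, racgGen, PresentedGroup.toGroup.of]
  rfl

variable (Γ) in
theorem length_heapAction_prod_le (m : List V) :
    (heapAction Γ (m.map (racgGen Γ)).prod (Heap.nil Γ)).length ≤ m.length := by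
  induction m with
  | nil => rfl
  | cons s m ih =>
    rw [map_cons, prod_cons, map_mul, Equiv.Perm.mul_apply, heapAction_racgGen]
    exact (Heap.length_toggle_le s _).trans (Nat.succ_le_succ ih)

theorem heapAction_prod_of_isChain {m : List V} (hm : IsChain Γᶜ.Adj m) :
    heapAction Γ (m.map (racgGen Γ)).prod (Heap.nil Γ) =
      Heap.mk ⟨m, not_hasCancellation_of_isChain hm⟩ := by
  induction m with
  | nil => rfl
  | cons s m ih =>
    rw [map_cons, prod_cons, map_mul, Equiv.Perm.mul_apply, heapAction_racgGen, ih hm.tail]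
    exact congrArg Heap.mk (Subtype.ext (if_neg (not_canMoveToHead_of_isChain_cons hm)))

end Action

theorem length_le_of_prod_eq_of_isChain {m u : List V} (hu : IsChain Γᶜ.Adj u)
    (h : (m.map (racgGen Γ)).prod = (u.map (racgGen Γ)).prod) : u.length ≤ m.length := by
  classical
  have hm := length_heapAction_prod_le Γ m
  rwa [h, heapAction_prod_of_isChain hu] at hm

end RightAngledCoxeter

theorem stmt8_general {V : Type*} (Γ : SimpleGraph V)
    (k : ℕ) (hk : 0 < k) (w : Fin k → V)
    (hne : ∀ i : Fin k, w i ≠ w ⟨(i + 1) % k, Nat.mod_lt _ hk⟩)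
    (hnadj : ∀ i : Fin k, ¬ Γ.Adj (w i) (w ⟨(i + 1) % k, Nat.mod_lt _ hk⟩))
    (n : ℕ) :
    ∀ m : List V,
      (m.map (racgGen Γ)).prod =
        (((List.replicate n (List.ofFn w)).flatten).map (racgGen Γ)).prod →
      n * k ≤ m.length := by
  intro m hm
  have hchain : IsChain Γᶜ.Adj (replicate n (ofFn w)).flatten :=
    isChain_flatten_replicate_ofFn hk (fun i => (Γ.compl_adj _ _).2 ⟨hne i, hnadj i⟩) n
  simpa using RightAngledCoxeter.length_le_of_prod_eq_of_isChain hchain hm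

/-- If `w = a₁ ⋯ a_k` is a word in the generators of a right-angled Coxeter group
such that (cyclically) consecutive letters are distinct and non-adjacent in `Γ`,
then `wⁿ` is reduced for every `n ≥ 1`: no word of length less than `n * k`
represents the same element (so that element has word length exactly `n * k`). -/
theorem stmt8 {V : Type*} [Fintype V] [DecidableEq V] (Γ : SimpleGraph V)
    (k : ℕ) (hk : 0 < k) (w : Fin k → V)
    (hne : ∀ i : Fin k, w i ≠ w ⟨(i + 1) % k, Nat.mod_lt _ hk⟩)
    (hnadj : ∀ i : Fin k, ¬ Γ.Adj (w i) (w ⟨(i + 1) % k, Nat.mod_lt _ hk⟩))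
    (n : ℕ) (hn : 1 ≤ n) :
    ∀ m : List V,
      (m.map (racgGen Γ)).prod =
        (((List.replicate n (List.ofFn w)).flatten).map (racgGen Γ)).prod →
      n * k ≤ m.length :=
  stmt8_general Γ k hk w hne hnadj n
end

section
/- Let Γ be a finite simplicial graph with vertex set S, and let T₁, T₂ ⊆ S be such that no vertex of T₁ \ T₂ is adjacent in Γ to any vertex of T₂ \ T₁. Then the special subgroup W_{T₁ ∪ T₂} of the right-angled Coxeter group W_Γ is isomorphic to the amalgamated free product W_{T₁} *_{W_{T₁ ∩ T₂}} W_{T₂}. -/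
universe u

/-- A two-element family of groups indexed by `Bool`, used to form binary
amalgamated free products via `Monoid.PushoutI`. -/
def famG (G₁ G₂ : Type u) : Bool → Type u
  | true => G₁
  | false => G₂

instance famGGroup (G₁ G₂ : Type u) [Group G₁] [Group G₂] : ∀ b, Group (famG G₁ G₂ b)
  | true => ‹Group G₁›
  | false => ‹Group G₂›

/-- The pair of amalgamating homomorphisms, as a `Bool`-indexed family. -/
def famHom {A G₁ G₂ : Type u} [Group A] [Group G₁] [Group G₂]
    (f : A →* G₁) (g : A →* G₂) : ∀ b, A →* famG G₁ G₂ b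
  | true => f
  | false => g

/-- The amalgamated free product `G₁ *_A G₂` along `f : A →* G₁`, `g : A →* G₂`. -/
abbrev AmalgProd {A G₁ G₂ : Type u} [Group A] [Group G₁] [Group G₂]
    (f : A →* G₁) (g : A →* G₂) : Type u :=
  Monoid.PushoutI (famHom f g)

/-!
Both sides are generated by the involutions `s ∈ T₁ ∪ T₂`. The hypothesis says exactly that
every edge of `Γ` between vertices of `T₁ ∪ T₂` lies inside `T₁` or inside `T₂`, so every
defining relation of `W_{T₁ ∪ T₂}` already holds in one factor of the amalgam; this gives a map
`W_{T₁ ∪ T₂} → W_{T₁} *_{W_{T₁ ∩ T₂}} W_{T₂}`. Conversely the two inclusions agree on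
`W_{T₁ ∩ T₂}`, and the two maps are mutually inverse on generators. Special subgroups are
identified with Coxeter groups of induced subgraphs through the retraction `W_Γ → W_T` that
kills the generators outside `T`.
-/

namespace AmalgProd

variable {A G₁ G₂ K : Type u} [Group A] [Group G₁] [Group G₂] [Group K]
  (f : A →* G₁) (g : A →* G₂)

def inl : G₁ →* AmalgProd f g := Monoid.PushoutI.of (φ := famHom f g) true

def inr : G₂ →* AmalgProd f g := Monoid.PushoutI.of (φ := famHom f g) false

theorem inl_apply_eq_inr_apply (a : A) : inl f g (f a) = inr f g (g a) :=
  (Monoid.PushoutI.of_apply_eq_base (famHom f g) true a).trans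
    (Monoid.PushoutI.of_apply_eq_base (famHom f g) false a).symm

variable {f g}

def famLift (φ₁ : G₁ →* K) (φ₂ : G₂ →* K) : ∀ b, famG G₁ G₂ b →* K
  | true => φ₁
  | false => φ₂

def lift (φ₁ : G₁ →* K) (φ₂ : G₂ →* K) (h : φ₁.comp f = φ₂.comp g) : AmalgProd f g →* K :=
  Monoid.PushoutI.lift (famLift φ₁ φ₂) (φ₁.comp f) (by rintro (_ | _); exacts [h.symm, rfl])

variable (φ₁ : G₁ →* K) (φ₂ : G₂ →* K) (h : φ₁.comp f = φ₂.comp g)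

@[simp]
theorem lift_inl (x : G₁) : lift φ₁ φ₂ h (inl f g x) = φ₁ x :=
  Monoid.PushoutI.lift_of (φ := famHom f g) (famLift φ₁ φ₂) _ _ (i := true) x

@[simp]
theorem lift_inr (x : G₂) : lift φ₁ φ₂ h (inr f g x) = φ₂ x :=
  Monoid.PushoutI.lift_of (φ := famHom f g) (famLift φ₁ φ₂) _ _ (i := false) x

theorem hom_ext {ψ ψ' : AmalgProd f g →* K} (h₁ : ψ.comp (inl f g) = ψ'.comp (inl f g))
    (h₂ : ψ.comp (inr f g) = ψ'.comp (inr f g)) : ψ = ψ' :=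
  Monoid.PushoutI.hom_ext_nonempty (by rintro (_ | _) <;> assumption)

end AmalgProd

theorem Subgroup.closure_hom_ext {G K : Type*} [Group G] [Group K] {S : Set G}
    {φ ψ : Subgroup.closure S →* K}
    (h : ∀ x (hx : x ∈ S),
      φ ⟨x, Subgroup.subset_closure hx⟩ = ψ ⟨x, Subgroup.subset_closure hx⟩) :
    φ = ψ :=
  MonoidHom.eq_of_eqOn_dense Subgroup.closure_closure_coe_preimage fun x hx => h x hx

namespace RACG

variable {V : Type*} {Γ : SimpleGraph V}

theorem gen_mul_self (s : V) : racgGen Γ s * racgGen Γ s = 1 :=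
  PresentedGroup.one_of_mem (Or.inl ⟨s, rfl⟩)

theorem commute_gen {s t : V} (hst : Γ.Adj s t) : Commute (racgGen Γ s) (racgGen Γ t) := by
  have := PresentedGroup.one_of_mem (rels := racgRels Γ) (Or.inr ⟨s, t, hst, rfl⟩)
  rwa [map_mul, map_mul, map_inv, map_inv, mul_assoc, ← mul_inv_rev, mul_inv_eq_one] at this

def lift {G : Type*} [Group G] (f : V → G) (hsq : ∀ s, f s * f s = 1)
    (hcomm : ∀ s t, Γ.Adj s t → Commute (f s) (f t)) : RACG Γ →* G :=
  PresentedGroup.toGroup (f := f) <| by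
    rintro r (⟨s, rfl⟩ | ⟨s, t, hst, rfl⟩)
    · simpa using hsq s
    · simp only [map_mul, map_inv, FreeGroup.lift_apply_of]
      rw [mul_assoc, ← mul_inv_rev, mul_inv_eq_one]
      exact hcomm s t hst

@[simp]
theorem lift_gen {G : Type*} [Group G] (f : V → G) (hsq : ∀ s, f s * f s = 1)
    (hcomm : ∀ s t, Γ.Adj s t → Commute (f s) (f t)) (s : V) :
    lift f hsq hcomm (racgGen Γ s) = f s :=
  PresentedGroup.toGroup.of _

theorem hom_ext {G : Type*} [Group G] {φ ψ : RACG Γ →* G}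
    (h : ∀ s, φ (racgGen Γ s) = ψ (racgGen Γ s)) : φ = ψ :=
  PresentedGroup.ext h

theorem gen_mem_closure {T : Set V} {s : V} (hs : s ∈ T) :
    racgGen Γ s ∈ Subgroup.closure (racgGen Γ '' T) :=
  Subgroup.subset_closure ⟨s, hs, rfl⟩

variable (Γ) (T : Set V)

def inducedHom : RACG (Γ.induce T) →* RACG Γ :=
  lift (fun s => racgGen Γ s) (fun s => gen_mul_self (s : V))
    (fun _ _ hst => commute_gen (SimpleGraph.comap_adj.mp hst))

open Classical in
noncomputable def retraction : RACG Γ →* RACG (Γ.induce T) :=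
  lift (fun s => if h : s ∈ T then racgGen (Γ.induce T) ⟨s, h⟩ else 1)
    (fun s => by split_ifs <;> simp [gen_mul_self])
    (fun s t hst => by
      split_ifs with hs ht ht
      · exact commute_gen (SimpleGraph.comap_adj.mpr hst : (Γ.induce T).Adj ⟨s, hs⟩ ⟨t, ht⟩)
      all_goals simp)

variable {Γ T}

@[simp]
theorem inducedHom_gen (s : T) : inducedHom Γ T (racgGen (Γ.induce T) s) = racgGen Γ s :=
  lift_gen ..

theorem retraction_gen_of_mem {s : V} (hs : s ∈ T) :
    retraction Γ T (racgGen Γ s) = racgGen (Γ.induce T) ⟨s, hs⟩ := by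
  simp [retraction, hs]

variable (Γ T)

theorem leftInverse_retraction_inducedHom :
    Function.LeftInverse (retraction Γ T) (inducedHom Γ T) :=
  DFunLike.congr_fun (show (retraction Γ T).comp (inducedHom Γ T) = MonoidHom.id _ from
    hom_ext fun s => by simp [retraction_gen_of_mem s.2])

theorem range_inducedHom : (inducedHom Γ T).range = Subgroup.closure (racgGen Γ '' T) := by
  rw [MonoidHom.range_eq_map, ← PresentedGroup.closure_range_of, MonoidHom.map_closure,
    ← Set.range_comp, Set.image_eq_range]
  exact congrArg _ (congrArg Set.range (funext inducedHom_gen))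

noncomputable def inducedEquivClosure :
    RACG (Γ.induce T) ≃* Subgroup.closure (racgGen Γ '' T) :=
  (MonoidHom.ofLeftInverse (leftInverse_retraction_inducedHom Γ T)).trans
    (MulEquiv.subgroupCongr (range_inducedHom Γ T))

end RACG

section Amalgam

variable {V : Type u} (Γ : SimpleGraph V) (T₁ T₂ : Set V)

def inclInterLeft :
    Subgroup.closure (racgGen Γ '' (T₁ ∩ T₂)) →* Subgroup.closure (racgGen Γ '' T₁) :=
  Subgroup.inclusion (Subgroup.closure_mono (Set.image_mono Set.inter_subset_left))

def inclInterRight :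
    Subgroup.closure (racgGen Γ '' (T₁ ∩ T₂)) →* Subgroup.closure (racgGen Γ '' T₂) :=
  Subgroup.inclusion (Subgroup.closure_mono (Set.image_mono Set.inter_subset_right))

abbrev SpecialAmalgam : Type u := AmalgProd (inclInterLeft Γ T₁ T₂) (inclInterRight Γ T₁ T₂)

variable {Γ T₁ T₂}

theorem inl_gen_eq_inr_gen {s : V} (h₁ : s ∈ T₁) (h₂ : s ∈ T₂) :
    AmalgProd.inl _ _ ⟨racgGen Γ s, RACG.gen_mem_closure h₁⟩ =
      (AmalgProd.inr _ _ ⟨racgGen Γ s, RACG.gen_mem_closure h₂⟩ : SpecialAmalgam Γ T₁ T₂) :=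
  AmalgProd.inl_apply_eq_inr_apply (inclInterLeft Γ T₁ T₂) (inclInterRight Γ T₁ T₂)
    ⟨racgGen Γ s, RACG.gen_mem_closure ⟨h₁, h₂⟩⟩

variable (Γ T₁ T₂) in
open Classical in
noncomputable def amalgGen (s : ↥(T₁ ∪ T₂)) : SpecialAmalgam Γ T₁ T₂ :=
  if h : (s : V) ∈ T₁ then AmalgProd.inl _ _ ⟨racgGen Γ s, RACG.gen_mem_closure h⟩
  else AmalgProd.inr _ _ ⟨racgGen Γ s, RACG.gen_mem_closure (s.2.resolve_left h)⟩

theorem amalgGen_of_mem_left {s : ↥(T₁ ∪ T₂)} (h : (s : V) ∈ T₁) :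
    amalgGen Γ T₁ T₂ s = AmalgProd.inl _ _ ⟨racgGen Γ s, RACG.gen_mem_closure h⟩ :=
  dif_pos h

theorem amalgGen_of_mem_right {s : ↥(T₁ ∪ T₂)} (h : (s : V) ∈ T₂) :
    amalgGen Γ T₁ T₂ s = AmalgProd.inr _ _ ⟨racgGen Γ s, RACG.gen_mem_closure h⟩ := by
  by_cases h₁ : (s : V) ∈ T₁
  · exact (dif_pos h₁).trans (inl_gen_eq_inr_gen h₁ h)
  · exact dif_neg h₁

theorem amalgGen_mul_self (s : ↥(T₁ ∪ T₂)) : amalgGen Γ T₁ T₂ s * amalgGen Γ T₁ T₂ s = 1 := by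
  rcases s.2 with h | h
  · rw [amalgGen_of_mem_left h, ← map_mul, ← map_one (AmalgProd.inl _ _)]
    exact congrArg _ (Subtype.ext (RACG.gen_mul_self _))
  · rw [amalgGen_of_mem_right h, ← map_mul, ← map_one (AmalgProd.inr _ _)]
    exact congrArg _ (Subtype.ext (RACG.gen_mul_self _))

theorem adj_mem_left_or_mem_right (hT : ∀ x ∈ T₁ \ T₂, ∀ y ∈ T₂ \ T₁, ¬ Γ.Adj x y)
    {s t : V} (hs : s ∈ T₁ ∪ T₂) (ht : t ∈ T₁ ∪ T₂) (hst : Γ.Adj s t) :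
    (s ∈ T₁ ∧ t ∈ T₁) ∨ (s ∈ T₂ ∧ t ∈ T₂) := by
  by_cases hs₁ : s ∈ T₁ <;> by_cases ht₁ : t ∈ T₁
  · exact Or.inl ⟨hs₁, ht₁⟩
  · have ht₂ := ht.resolve_left ht₁
    exact Or.inr ⟨by_contra fun hs₂ => hT s ⟨hs₁, hs₂⟩ t ⟨ht₂, ht₁⟩ hst, ht₂⟩
  · have hs₂ := hs.resolve_left hs₁
    exact Or.inr ⟨hs₂, by_contra fun ht₂ => hT t ⟨ht₁, ht₂⟩ s ⟨hs₂, hs₁⟩ hst.symm⟩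
  · exact Or.inr ⟨hs.resolve_left hs₁, ht.resolve_left ht₁⟩

theorem commute_amalgGen (hT : ∀ x ∈ T₁ \ T₂, ∀ y ∈ T₂ \ T₁, ¬ Γ.Adj x y)
    {s t : ↥(T₁ ∪ T₂)} (hst : Γ.Adj s t) :
    Commute (amalgGen Γ T₁ T₂ s) (amalgGen Γ T₁ T₂ t) := by
  rcases adj_mem_left_or_mem_right hT s.2 t.2 hst with ⟨hs, ht⟩ | ⟨hs, ht⟩
  · rw [amalgGen_of_mem_left hs, amalgGen_of_mem_left ht]
    exact (Commute.of_map (Subgroup.subtype_injective _) (RACG.commute_gen hst)).map _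
  · rw [amalgGen_of_mem_right hs, amalgGen_of_mem_right ht]
    exact (Commute.of_map (Subgroup.subtype_injective _) (RACG.commute_gen hst)).map _

variable (T₁ T₂) in
noncomputable def toSpecialAmalgam (hT : ∀ x ∈ T₁ \ T₂, ∀ y ∈ T₂ \ T₁, ¬ Γ.Adj x y) :
    RACG (Γ.induce (T₁ ∪ T₂)) →* SpecialAmalgam Γ T₁ T₂ :=
  RACG.lift (amalgGen Γ T₁ T₂) amalgGen_mul_self
    fun _ _ hst => commute_amalgGen hT (SimpleGraph.comap_adj.mp hst)

variable (Γ T₁ T₂) in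
noncomputable def ofSpecialAmalgam : SpecialAmalgam Γ T₁ T₂ →* RACG (Γ.induce (T₁ ∪ T₂)) :=
  AmalgProd.lift ((RACG.retraction Γ (T₁ ∪ T₂)).comp (Subgroup.closure _).subtype)
    ((RACG.retraction Γ (T₁ ∪ T₂)).comp (Subgroup.closure _).subtype)
    (MonoidHom.ext fun _ => rfl)

theorem ofSpecialAmalgam_amalgGen (s : ↥(T₁ ∪ T₂)) :
    ofSpecialAmalgam Γ T₁ T₂ (amalgGen Γ T₁ T₂ s) = racgGen (Γ.induce (T₁ ∪ T₂)) s := by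
  rcases s.2 with h | h
  · rw [amalgGen_of_mem_left h, ofSpecialAmalgam, AmalgProd.lift_inl]
    exact RACG.retraction_gen_of_mem s.2
  · rw [amalgGen_of_mem_right h, ofSpecialAmalgam, AmalgProd.lift_inr]
    exact RACG.retraction_gen_of_mem s.2

theorem toSpecialAmalgam_retraction_gen (hT : ∀ x ∈ T₁ \ T₂, ∀ y ∈ T₂ \ T₁, ¬ Γ.Adj x y)
    {s : V} (hs : s ∈ T₁ ∪ T₂) :
    toSpecialAmalgam T₁ T₂ hT (RACG.retraction Γ (T₁ ∪ T₂) (racgGen Γ s)) =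
      amalgGen Γ T₁ T₂ ⟨s, hs⟩ := by
  rw [RACG.retraction_gen_of_mem hs, toSpecialAmalgam, RACG.lift_gen]

theorem ofSpecialAmalgam_comp_toSpecialAmalgam
    (hT : ∀ x ∈ T₁ \ T₂, ∀ y ∈ T₂ \ T₁, ¬ Γ.Adj x y) :
    (ofSpecialAmalgam Γ T₁ T₂).comp (toSpecialAmalgam T₁ T₂ hT) = MonoidHom.id _ :=
  RACG.hom_ext fun s => by
    rw [MonoidHom.comp_apply, toSpecialAmalgam, RACG.lift_gen, ofSpecialAmalgam_amalgGen,
      MonoidHom.id_apply]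

theorem toSpecialAmalgam_comp_ofSpecialAmalgam
    (hT : ∀ x ∈ T₁ \ T₂, ∀ y ∈ T₂ \ T₁, ¬ Γ.Adj x y) :
    (toSpecialAmalgam T₁ T₂ hT).comp (ofSpecialAmalgam Γ T₁ T₂) = MonoidHom.id _ := by
  refine AmalgProd.hom_ext (Subgroup.closure_hom_ext ?_) (Subgroup.closure_hom_ext ?_)
  all_goals
    rintro _ ⟨s, hs, rfl⟩
    simp only [MonoidHom.comp_apply, ofSpecialAmalgam, AmalgProd.lift_inl, AmalgProd.lift_inr,
      Subgroup.coe_subtype, MonoidHom.id_apply]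
  · rw [toSpecialAmalgam_retraction_gen hT (Or.inl hs), amalgGen_of_mem_left hs]
  · rw [toSpecialAmalgam_retraction_gen hT (Or.inr hs), amalgGen_of_mem_right hs]

end Amalgam

theorem stmt16_general {V : Type u} (Γ : SimpleGraph V)
    (T₁ T₂ : Set V)
    (h : ∀ x ∈ T₁ \ T₂, ∀ y ∈ T₂ \ T₁, ¬ Γ.Adj x y) :
    Nonempty (↥(Subgroup.closure (racgGen Γ '' (T₁ ∪ T₂))) ≃*
      AmalgProd
        (Subgroup.inclusion (Subgroup.closure_mono
          (Set.image_mono Set.inter_subset_left)) :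
            ↥(Subgroup.closure (racgGen Γ '' (T₁ ∩ T₂))) →*
            ↥(Subgroup.closure (racgGen Γ '' T₁)))
        (Subgroup.inclusion (Subgroup.closure_mono
          (Set.image_mono Set.inter_subset_right)))) :=
  ⟨(RACG.inducedEquivClosure Γ (T₁ ∪ T₂)).symm.trans
    (MonoidHom.toMulEquiv (toSpecialAmalgam T₁ T₂ h) (ofSpecialAmalgam Γ T₁ T₂)
      (ofSpecialAmalgam_comp_toSpecialAmalgam h) (toSpecialAmalgam_comp_ofSpecialAmalgam h))⟩

/-- If no vertex of `T₁ \ T₂` is adjacent to any vertex of `T₂ \ T₁`, then the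
special subgroup `W_{T₁ ∪ T₂}` is the amalgamated free product
`W_{T₁} *_{W_{T₁ ∩ T₂}} W_{T₂}` (amalgamated along the inclusions). -/
theorem stmt16 {V : Type u} [Fintype V] [DecidableEq V] (Γ : SimpleGraph V)
    (T₁ T₂ : Set V)
    (h : ∀ x ∈ T₁ \ T₂, ∀ y ∈ T₂ \ T₁, ¬ Γ.Adj x y) :
    Nonempty (↥(Subgroup.closure (racgGen Γ '' (T₁ ∪ T₂))) ≃*
      AmalgProd
        (Subgroup.inclusion (Subgroup.closure_mono
          (Set.image_mono Set.inter_subset_left)) :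
            ↥(Subgroup.closure (racgGen Γ '' (T₁ ∩ T₂))) →*
            ↥(Subgroup.closure (racgGen Γ '' T₁)))
        (Subgroup.inclusion (Subgroup.closure_mono
          (Set.image_mono Set.inter_subset_right)))) :=
  stmt16_general Γ T₁ T₂ h
end

section
/- Let G_d be the group with presentation ⟨a₀, a₁, …, a_d | a₀a₁ = a₁a₀, and a_i⁻¹ a₀ a_i = a_{i-1} for 2 ≤ i ≤ d⟩ (d ≥ 2). Then the subgroup of G_d generated by a₀ and a₁ is isomorphic to ℤ². -/
open Subgroup HNNExtension

/-- iso `Multiplicative ℤ ≃* zpowers x` for an infinite-order element. -/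
noncomputable def zpowInfIso {G : Type*} [Group G] (x : G) (hx : ¬ IsOfFinOrder x) :
    Multiplicative ℤ ≃* Subgroup.zpowers x := by
  refine MulEquiv.ofBijective
    ((zpowersHom G x).codRestrict (Subgroup.zpowers x) (fun n => ⟨n.toAdd, rfl⟩)) ⟨?_, ?_⟩
  · intro m n h
    have h' : x ^ m.toAdd = x ^ n.toAdd := congrArg Subtype.val h
    have := (injective_zpow_iff_not_isOfFinOrder (x := x)).2 hx h'
    exact Multiplicative.toAdd.injective this
  · rintro ⟨y, k, rfl⟩
    exact ⟨Multiplicative.ofAdd k, rfl⟩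

lemma zpowInfIso_one {G : Type*} [Group G] (x : G) (hx : ¬ IsOfFinOrder x) :
    zpowInfIso x hx (Multiplicative.ofAdd 1) = ⟨x, Subgroup.mem_zpowers x⟩ := by
  apply Subtype.ext
  show x ^ (1 : ℤ) = x
  simp

/-- iso between the cyclic subgroups generated by two infinite-order elements. -/
noncomputable def zzIso {G : Type*} [Group G] (x y : G) (hx : ¬ IsOfFinOrder x)
    (hy : ¬ IsOfFinOrder y) : (Subgroup.zpowers x) ≃* (Subgroup.zpowers y) :=
  (zpowInfIso x hx).symm.trans (zpowInfIso y hy)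

lemma zzIso_apply {G : Type*} [Group G] (x y : G) (hx : ¬ IsOfFinOrder x)
    (hy : ¬ IsOfFinOrder y) :
    zzIso x y hx hy ⟨x, Subgroup.mem_zpowers x⟩ = ⟨y, Subgroup.mem_zpowers y⟩ := by
  have h1 : (zpowInfIso x hx).symm ⟨x, Subgroup.mem_zpowers x⟩ = Multiplicative.ofAdd 1 := by
    rw [← zpowInfIso_one x hx, MulEquiv.symm_apply_apply]
  show (zpowInfIso y hy) ((zpowInfIso x hx).symm ⟨x, Subgroup.mem_zpowers x⟩) = _
  rw [h1, zpowInfIso_one]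

lemma notFinOrd_ofAdd_one_int : ¬ IsOfFinOrder (Multiplicative.ofAdd (1 : ℤ)) := by
  rw [isOfFinOrder_iff_pow_eq_one]
  rintro ⟨n, hn, h⟩
  have : ((n : ℤ)) = 0 := by
    have := congrArg Multiplicative.toAdd h
    simpa using this
  omega

lemma exists_model : ∀ n : ℕ, 1 ≤ n → ∃ (H : Type) (_ : Group H) (x : ℕ → H),
    (x 0 * x 1 = x 1 * x 0) ∧
    (∀ i : ℕ, 2 ≤ i → i ≤ n → (x i)⁻¹ * x 0 * x i = x (i - 1)) ∧
    Function.Injective (fun p : ℤ × ℤ => x 0 ^ p.1 * x 1 ^ p.2) ∧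
    ¬ IsOfFinOrder (x n) := by
  refine Nat.le_induction ?_ ?_
  · -- base
    set a : Multiplicative (ℤ × ℤ) := Multiplicative.ofAdd ((1:ℤ),(0:ℤ)) with ha
    set b : Multiplicative (ℤ × ℤ) := Multiplicative.ofAdd ((0:ℤ),(1:ℤ)) with hb
    refine ⟨Multiplicative (ℤ × ℤ), inferInstance,
      fun i => if i = 0 then a else b, mul_comm _ _, ?_, ?_, ?_⟩
    · intro i h1 h2; omega
    · have key : ∀ p : ℤ × ℤ, a ^ p.1 * b ^ p.2 = Multiplicative.ofAdd p := by
        intro p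
        rw [ha, hb, ← ofAdd_zsmul, ← ofAdd_zsmul, ← ofAdd_add]
        congr 1
        simp [Prod.ext_iff]
      intro p q h
      have e0 : (if (0:ℕ) = 0 then a else b) = a := if_pos rfl
      have e1 : (if (1:ℕ) = 0 then a else b) = b := if_neg one_ne_zero
      beta_reduce at h
      rw [e0, e1, key p, key q] at h
      exact Multiplicative.ofAdd.injective h
    · show ¬ IsOfFinOrder (if 1 = 0 then a else b)
      rw [if_neg one_ne_zero, hb, isOfFinOrder_iff_pow_eq_one]
      rintro ⟨n, hn, h⟩
      have := congrArg Multiplicative.toAdd h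
      rw [← ofAdd_nsmul] at this
      simp only [toAdd_ofAdd, toAdd_one, Prod.smul_mk, smul_zero, nsmul_eq_mul, mul_one] at this
      rw [Prod.mk.injEq] at this
      exact_mod_cast absurd this.2 (by positivity)
  · -- step
    rintro n hn ⟨H, _, x, hcomm, hrel, hinj, hfin⟩
    have hx0 : ¬ IsOfFinOrder (x 0) := by
      rw [isOfFinOrder_iff_pow_eq_one]
      rintro ⟨k, hk, h⟩
      have : ((k : ℤ), (0:ℤ)) = ((0:ℤ), (0:ℤ)) := by
        apply hinj
        simp only [zpow_zero, mul_one, zpow_natCast]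
        simpa using h
      rw [Prod.mk.injEq] at this
      exact_mod_cast absurd this.1 (by positivity)
    let φ := zzIso (x 0) (x n) hx0 hfin
    let H' := HNNExtension H (Subgroup.zpowers (x 0)) (Subgroup.zpowers (x n)) φ
    let x' : ℕ → H' := fun i => if i = n + 1 then t⁻¹ else of (x i)
    have hx'of : ∀ i, i ≠ n + 1 → x' i = of (x i) := fun i h => if_neg h
    have hx'0 : x' 0 = of (x 0) := hx'of 0 (by omega)
    have hx'1 : x' 1 = of (x 1) := hx'of 1 (by omega)
    have htfin : ¬ IsOfFinOrder (t : H') := by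
      intro ht
      have hlift : ∀ a : Subgroup.zpowers (x 0),
          (Multiplicative.ofAdd (1:ℤ)) * (1 : H →* Multiplicative ℤ) (a : H)
            = (1 : H →* Multiplicative ℤ) ((φ a : H)) * Multiplicative.ofAdd (1:ℤ) := by
        intro a; simp
      have := (HNNExtension.lift (1 : H →* Multiplicative ℤ)
        (Multiplicative.ofAdd (1:ℤ)) hlift).isOfFinOrder ht
      rw [lift_t] at this
      exact notFinOrd_ofAdd_one_int this
    refine ⟨H', inferInstance, x', ?_, ?_, ?_, ?_⟩
    · rw [hx'0, hx'1, ← map_mul, ← map_mul, hcomm]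
    · intro i h2 hle
      rcases eq_or_lt_of_le hle with heq | hlt
      · subst heq
        rw [hx'of (n + 1 - 1) (by omega)]
        show (if n+1 = n+1 then (t : H')⁻¹ else of (x (n+1)))⁻¹ * x' 0 *
          (if n+1 = n+1 then (t : H')⁻¹ else of (x (n+1))) = _
        rw [if_pos rfl, inv_inv, hx'0]
        have := equiv_eq_conj (φ := φ) ⟨x 0, Subgroup.mem_zpowers _⟩
        rw [zzIso_apply] at this
        show t * of (x 0) * t⁻¹ = of (x (n + 1 - 1))
        have hn1 : n + 1 - 1 = n := by omega
        rw [hn1, ← this]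
      · rw [hx'of i (by omega), hx'of (i-1) (by omega), hx'0, ← map_inv, ← map_mul, ← map_mul,
          hrel i h2 (by omega)]
    · intro p q h
      apply hinj
      simp only [hx'0, hx'1, ← map_zpow, ← map_mul] at h
      exact HNNExtension.of_injective φ h
    · show ¬ IsOfFinOrder (x' (n+1))
      have hp : x' (n+1) = (t : H')⁻¹ := if_pos rfl
      rw [hp, isOfFinOrder_inv_iff]
      exact htfin

/-- The relators of Macura's group
`G_d = ⟨a₀,…,a_d ∣ a₀a₁ = a₁a₀, aᵢ⁻¹a₀aᵢ = aᵢ₋₁ (2 ≤ i ≤ d)⟩`. -/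
def macuraRels (d : ℕ) : Set (FreeGroup (Fin (d + 1))) :=
  {r | r = FreeGroup.of 0 * FreeGroup.of 1 * (FreeGroup.of 0)⁻¹ * (FreeGroup.of 1)⁻¹ ∨
    ∃ i : Fin (d + 1), 2 ≤ (i : ℕ) ∧
      r = (FreeGroup.of i)⁻¹ * FreeGroup.of 0 * FreeGroup.of i * (FreeGroup.of (i - 1))⁻¹}

/-- Macura's group `G_d`. -/
abbrev MacuraGroup (d : ℕ) : Type := PresentedGroup (macuraRels d)

set_option maxHeartbeats 1000000 in
/-- For `d ≥ 2`, the subgroup of `G_d` generated by `a₀` and `a₁` is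
isomorphic to `ℤ²`. -/
theorem stmt19 (d : ℕ) (hd : 2 ≤ d) :
    Nonempty (↥(Subgroup.closure
        {PresentedGroup.of (rels := macuraRels d) 0,
         PresentedGroup.of (rels := macuraRels d) 1}) ≃*
      Multiplicative (ℤ × ℤ)) := by
  obtain ⟨H, _, x, hcomm, hrel, hinj, -⟩ := exists_model d (by omega)
  -- values in Fin coordinates
  have h0 : ((0 : Fin (d+1)) : ℕ) = 0 := rfl
  have h1 : ((1 : Fin (d+1)) : ℕ) = 1 := by
    rw [Fin.val_one']; exact Nat.mod_eq_of_lt (by omega)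
  -- the homomorphism from the presented group
  have hlift : ∀ r ∈ macuraRels d, FreeGroup.lift (fun i : Fin (d+1) => x i.val) r = 1 := by
    rintro r (rfl | ⟨i, hi2, rfl⟩)
    · simp only [map_mul, map_inv, FreeGroup.lift_apply_of, h0, h1]
      rw [hcomm]
      group
    · have hiv : (i : ℕ) ≤ d := by omega
      have hsub : ((i - 1 : Fin (d+1)) : ℕ) = (i : ℕ) - 1 := by
        rw [Fin.coe_sub_one, if_neg]
        intro hz
        rw [hz] at hi2
        simp at hi2
      simp only [map_mul, map_inv, FreeGroup.lift_apply_of, h0, hsub]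
      rw [show (x i.val)⁻¹ * x 0 * x i.val = x (i.val - 1) from hrel i.val hi2 hiv]
      group
  let φ : MacuraGroup d →* H := PresentedGroup.toGroup hlift
  set a : MacuraGroup d := PresentedGroup.of 0 with haa
  set b : MacuraGroup d := PresentedGroup.of 1 with hbb
  have hφa : φ a = x 0 := by
    rw [haa]; exact (PresentedGroup.toGroup.of hlift).trans (by rw [h0])
  have hφb : φ b = x 1 := by
    rw [hbb]; exact (PresentedGroup.toGroup.of hlift).trans (by rw [h1])
  -- a and b commute in the presented group
  have hab : a * b = b * a := by
    have hmem : (FreeGroup.of 0 * FreeGroup.of 1 * (FreeGroup.of 0)⁻¹ * (FreeGroup.of 1)⁻¹ :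
        FreeGroup (Fin (d+1))) ∈ Subgroup.normalClosure (macuraRels d) :=
      Subgroup.subset_normalClosure (Or.inl rfl)
    have h1' : a * b * a⁻¹ * b⁻¹ = 1 := (QuotientGroup.eq_one_iff _).2 hmem
    have := mul_eq_one_iff_eq_inv.1 h1'
    calc a * b = (a * b * a⁻¹ * b⁻¹) * (b * a) := by group
    _ = b * a := by rw [h1']; group
  have hC : Commute a b := hab
  -- the homomorphism ℤ² → G
  let Ψ : Multiplicative (ℤ × ℤ) →* MacuraGroup d :=
    { toFun := fun p => a ^ (p.toAdd.1) * b ^ (p.toAdd.2)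
      map_one' := by simp
      map_mul' := by
        intro p q
        show a ^ (p.toAdd.1 + q.toAdd.1) * b ^ (p.toAdd.2 + q.toAdd.2) = _
        rw [zpow_add, zpow_add]
        have := (hC.zpow_zpow q.toAdd.1 p.toAdd.2).eq
        calc a ^ p.toAdd.1 * a ^ q.toAdd.1 * (b ^ p.toAdd.2 * b ^ q.toAdd.2)
            = a ^ p.toAdd.1 * (a ^ q.toAdd.1 * b ^ p.toAdd.2) * b ^ q.toAdd.2 := by group
          _ = a ^ p.toAdd.1 * (b ^ p.toAdd.2 * a ^ q.toAdd.1) * b ^ q.toAdd.2 := by rw [this]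
          _ = _ := by group }
  have hΨ : ∀ p : Multiplicative (ℤ × ℤ), Ψ p = a ^ (p.toAdd.1) * b ^ (p.toAdd.2) := fun _ => rfl
  have hΨinj : Function.Injective Ψ := by
    intro p q h
    have h2 : x 0 ^ (p.toAdd.1) * x 1 ^ (p.toAdd.2) = x 0 ^ (q.toAdd.1) * x 1 ^ (q.toAdd.2) := by
      have := congrArg φ h
      rwa [hΨ, hΨ, map_mul, map_mul, map_zpow, map_zpow, map_zpow, map_zpow, hφa, hφb] at this
    have := hinj h2
    exact Multiplicative.toAdd.injective (Prod.ext (congrArg Prod.fst this) (congrArg Prod.snd this))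
  have hrange : Ψ.range = Subgroup.closure {a, b} := by
    apply le_antisymm
    · rintro _ ⟨p, rfl⟩
      rw [hΨ]
      have hamem : a ∈ Subgroup.closure ({a, b} : Set (MacuraGroup d)) :=
        Subgroup.subset_closure (Set.mem_insert _ _)
      have hbmem : b ∈ Subgroup.closure ({a, b} : Set (MacuraGroup d)) :=
        Subgroup.subset_closure (Set.mem_insert_of_mem _ rfl)
      exact mul_mem (Subgroup.zpow_mem _ hamem _) (Subgroup.zpow_mem _ hbmem _)
    · rw [Subgroup.closure_le]
      rintro y hy
      rcases hy with rfl | rfl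
      · refine ⟨Multiplicative.ofAdd ((1:ℤ), (0:ℤ)), ?_⟩
        rw [hΨ]
        simp
      · refine ⟨Multiplicative.ofAdd ((0:ℤ), (1:ℤ)), ?_⟩
        rw [hΨ]
        simp
  exact ⟨((MonoidHom.ofInjective hΨinj).trans (MulEquiv.subgroupCongr hrange)).symm⟩
end
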